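/- Let F : ℝ² → ℝ be Lipschitz with constant L, nondecreasing in the first argument and nonincreasing in the second. Let a ≤ c ≤ d ≤ b be reals. Then ∫_a^b (F(b,a) - F(s,s)) ds ≥ (1/(2L))·(F(d,c) - F(d,d))². -/

import Mathlib

/-!
With `M = F(d,c) - F(d,d)`, the integrand `F(b,a) - F(s,s)` is nonnegative on `[a,b]` by
monotonicity, and on `[a,d]` it dominates the ramp `M - L(d - s)`: indeed `F(b,a) ≥ F(d,c)`,
`F(s,s) ≤ F(d,s)` and `F(d,s) - F(d,d) ≤ L(d - s)`. The ramp is nonnegative on an interval of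
length `M / L ≤ d - c` ending at `d`, and its integral there is `M² / (2L)`.
-/

open intervalIntegral MeasureTheory Set

lemma integral_ramp {L : ℝ} (hL : L ≠ 0) (M d : ℝ) :
    ∫ s in (d - M / L)..d, (M - L * (d - s)) = M ^ 2 / (2 * L) := by
  rw [intervalIntegral.integral_comp_sub_left (fun x => M - L * x) d]
  simp only [sub_self, sub_sub_cancel]
  rw [intervalIntegral.integral_sub intervalIntegrable_const
    ((continuous_const_mul L).intervalIntegrable _ _), intervalIntegral.integral_const,
    intervalIntegral.integral_const_mul, integral_id, smul_eq_mul]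
  field_simp
  ring

lemma sq_div_le_integral_of_ramp_le {g : ℝ → ℝ} {a b d L M : ℝ} (hL : 0 < L) (hM : 0 ≤ M)
    (hMd : M ≤ L * (d - a)) (hdb : d ≤ b) (hg : IntervalIntegrable g volume a b)
    (hg_nonneg : ∀ s ∈ Icc a b, 0 ≤ g s)
    (hramp : ∀ s ∈ Icc a d, M - L * (d - s) ≤ g s) :
    M ^ 2 / (2 * L) ≤ ∫ s in a..b, g s := by
  have hae : a ≤ d - M / L := by rw [le_sub_comm, div_le_iff₀ hL]; linarith
  have hed : d - M / L ≤ d := sub_le_self d (div_nonneg hM hL.le)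
  have hg_sub : IntervalIntegrable g volume (d - M / L) d :=
    hg.mono_set (uIcc_subset_uIcc (mem_uIcc_of_le hae (hed.trans hdb))
      (mem_uIcc_of_le (hae.trans hed) hdb))
  have hg_ae : 0 ≤ᵐ[volume.restrict (Ioc a b)] g :=
    (ae_restrict_iff' measurableSet_Ioc).2
      (ae_of_all _ fun s hs => hg_nonneg s (Ioc_subset_Icc_self hs))
  calc M ^ 2 / (2 * L) = ∫ s in (d - M / L)..d, (M - L * (d - s)) :=
        (integral_ramp hL.ne' M d).symm
    _ ≤ ∫ s in (d - M / L)..d, g s :=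
        integral_mono_on hed (Continuous.intervalIntegrable (by fun_prop) _ _) hg_sub
          fun s hs => hramp s ⟨hae.trans hs.1, hs.2⟩
    _ ≤ ∫ s in a..b, g s := integral_mono_interval hae hed hdb hg_ae hg

lemma lipschitzWith_diag {F : ℝ → ℝ → ℝ} {L : ℝ}
    (hLip₁ : ∀ a a' b : ℝ, |F a b - F a' b| ≤ L * |a - a'|)
    (hLip₂ : ∀ a b b' : ℝ, |F a b - F a b'| ≤ L * |b - b'|) :
    LipschitzWith (2 * L).toNNReal fun s => F s s :=
  LipschitzWith.of_dist_le' fun x y => by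
    simp only [Real.dist_eq]
    calc |F x x - F y y| ≤ |F x x - F y x| + |F y x - F y y| := abs_sub_le _ _ _
      _ ≤ L * |x - y| + L * |x - y| := add_le_add (hLip₁ x y x) (hLip₂ y x y)
      _ = 2 * L * |x - y| := by ring

theorem weak_BV_key_inequality (F : ℝ → ℝ → ℝ) (L : ℝ) (hL : 0 < L)
    (hLip₁ : ∀ a a' b : ℝ, |F a b - F a' b| ≤ L * |a - a'|)
    (hLip₂ : ∀ a b b' : ℝ, |F a b - F a b'| ≤ L * |b - b'|)
    (hmono₁ : ∀ b : ℝ, Monotone fun a => F a b)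
    (hmono₂ : ∀ a : ℝ, Antitone fun b => F a b)
    (a b c d : ℝ) (hac : a ≤ c) (hcd : c ≤ d) (hdb : d ≤ b) :
    (∫ s in a..b, (F b a - F s s)) ≥ (F d c - F d d) ^ 2 / (2 * L) := by
  have hLip_d : ∀ s ≤ d, F d s - F d d ≤ L * (d - s) := fun s hs =>
    calc F d s - F d d ≤ L * |s - d| := (le_abs_self _).trans (hLip₂ d s d)
      _ = L * (d - s) := by rw [abs_sub_comm, abs_of_nonneg (sub_nonneg.2 hs)]
  have hM : 0 ≤ F d c - F d d := sub_nonneg.2 (hmono₂ d hcd)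
  have hMd : F d c - F d d ≤ L * (d - a) := (hLip_d c hcd).trans (by gcongr)
  have hcont : Continuous fun s => F b a - F s s :=
    continuous_const.sub (lipschitzWith_diag hLip₁ hLip₂).continuous
  refine sq_div_le_integral_of_ramp_le hL hM hMd hdb (hcont.intervalIntegrable _ _) ?_ ?_
  · rintro s ⟨has, hsb⟩
    have : F s s ≤ F b a := (hmono₁ s hsb).trans (hmono₂ b has)
    linarith
  · rintro s ⟨has, hsd⟩
    have hcorner : F d c ≤ F b a := (hmono₂ d hac).trans (hmono₁ a hdb)
    have hdiag : F s s ≤ F d s := hmono₁ s hsd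
    linarith [hLip_d s hsd]
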